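/- Let d ≥ 1, u > 0, κ ≥ 1, m ∈ ℝ^{2d}, and let Σ be a symmetric positive-definite (2d)×(2d) real matrix such that κ^{-1}|𝕋_u^{-1}x|² ≤ ⟨Σ^{-1}x, x⟩ ≤ κ|𝕋_u^{-1}x|² for all x ∈ ℝ^{2d}. Define the Gaussian density p(y) := (2π)^{-d} (det Σ)^{-1/2} exp(−(1/2)⟨Σ^{-1}(m−y), m−y⟩). Then there exist constants C₀ ≥ 1 and λ₀ ≥ 1, depending only on d and κ, such that for all y = (y₁,y₂) ∈ ℝ^{2d}: C₀^{-1} g_{λ₀^{-1}}(u, m−y) ≤ p(y) ≤ C₀ g_{λ₀}(u, m−y), |∇_{y₁} p(y)| ≤ C₀ u^{-1/2} g_{λ₀}(u, m−y), and |∇_{y₂} p(y)| ≤ C₀ u^{-3/2} g_{λ₀}(u, m−y). -/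

import Mathlib

open MeasureTheory Matrix
open scoped BigOperators

/-- The anisotropic Gaussian kernel on `ℝ^{2d}`, realized on `(Fin d ⊕ Fin d) → ℝ`
with first block indexed by `Sum.inl` and second block by `Sum.inr`. -/
noncomputable def gkS (d : ℕ) (lam u : ℝ) (z : (Fin d ⊕ Fin d) → ℝ) : ℝ :=
  (2 * Real.pi * lam) ^ (-(d : ℝ)) * u ^ (-(2 * (d : ℝ))) *
    Real.exp (-((∑ i : Fin d, z (Sum.inl i) ^ 2) / (lam * u) +
      (∑ i : Fin d, z (Sum.inr i) ^ 2) / (lam * u ^ 3)))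

/-- `|𝕋_u^{-1} z|² = |z₁|²/u + |z₂|²/u³`. -/
noncomputable def tsq (d : ℕ) (u : ℝ) (z : (Fin d ⊕ Fin d) → ℝ) : ℝ :=
  (∑ i : Fin d, z (Sum.inl i) ^ 2) / u + (∑ i : Fin d, z (Sum.inr i) ^ 2) / u ^ 3

/-- Partial derivative in the `k`-th coordinate. -/
noncomputable def pdS (d : ℕ) (k : Fin d ⊕ Fin d) (f : ((Fin d ⊕ Fin d) → ℝ) → ℝ)
    (y : (Fin d ⊕ Fin d) → ℝ) : ℝ :=
  deriv (fun t => f (Function.update y k t)) (y k)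

/-- The Gaussian density with mean `m` and covariance `S`. -/
noncomputable def gaussDens (d : ℕ) (S : Matrix (Fin d ⊕ Fin d) (Fin d ⊕ Fin d) ℝ)
    (m y : (Fin d ⊕ Fin d) → ℝ) : ℝ :=
  (2 * Real.pi) ^ (-(d : ℝ)) * S.det ^ (-(1 : ℝ) / 2) *
    Real.exp (-(1 / 2) * ((S⁻¹ *ᵥ (m - y)) ⬝ᵥ (m - y)))

/-!
Put `q = ⟨Σ⁻¹(m - y), m - y⟩` and `t = |𝕋_u⁻¹(m - y)|²`, so that `κ⁻¹ t ≤ q ≤ κ t`.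
The matrix `𝕋_u Σ⁻¹ 𝕋_u` has its spectrum in `[κ⁻¹, κ]`, hence `det Σ` equals `u^{4d}` up to
a factor `κ^{±2d}`; together with the bounds on `q` this gives the two-sided bounds on `p`.
The gradient is `p · Σ⁻¹(m - y)`, and Cauchy–Schwarz for the form `Σ⁻¹`, tested against
`𝕋_u² Σ⁻¹(m - y)`, gives `|𝕋_u Σ⁻¹(m - y)|² ≤ κ² t`. The remaining factor `√t` is absorbed by
half of the Gaussian decay, at the price of replacing `λ = 2κ` by `λ₀ = 4κ`.
-/

open Real Function

namespace Matrix

variable {n : Type*} [Fintype n]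

lemma IsSymm.mulVec_dotProduct_comm {A : Matrix n n ℝ} (hA : A.IsSymm) (v w : n → ℝ) :
    (A *ᵥ v) ⬝ᵥ w = (A *ᵥ w) ⬝ᵥ v := by
  rw [dotProduct_comm, dotProduct_mulVec, ← mulVec_transpose, hA.eq]

lemma PosSemidef.mulVec_dotProduct_self_nonneg {A : Matrix n n ℝ} (hA : A.PosSemidef)
    (x : n → ℝ) : 0 ≤ (A *ᵥ x) ⬝ᵥ x := by
  simpa [dotProduct_comm] using hA.dotProduct_mulVec_nonneg x

lemma PosSemidef.sq_mulVec_dotProduct_le {A : Matrix n n ℝ} (hA : A.PosSemidef)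
    (v w : n → ℝ) : ((A *ᵥ v) ⬝ᵥ w) ^ 2 ≤ ((A *ᵥ v) ⬝ᵥ v) * ((A *ᵥ w) ⬝ᵥ w) := by
  have hsymm : A.IsSymm := isHermitian_iff_isSymm.mp hA.1
  have hquad : ∀ s : ℝ,
      0 ≤ ((A *ᵥ w) ⬝ᵥ w) * (s * s) + 2 * ((A *ᵥ v) ⬝ᵥ w) * s + (A *ᵥ v) ⬝ᵥ v := by
    intro s
    have := hA.mulVec_dotProduct_self_nonneg (v + s • w)
    simp only [mulVec_add, mulVec_smul, add_dotProduct, dotProduct_add, smul_dotProduct,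
      dotProduct_smul, smul_eq_mul, hsymm.mulVec_dotProduct_comm w v] at this
    linarith
  have := discrim_le_zero hquad
  rw [discrim] at this
  linarith

lemma IsHermitian.eigenvalues_mem_Icc_of_forall_mem_Icc [DecidableEq n] {B : Matrix n n ℝ}
    (hB : B.IsHermitian) {a b : ℝ}
    (h : ∀ x, a * ∑ j, x j ^ 2 ≤ (B *ᵥ x) ⬝ᵥ x ∧ (B *ᵥ x) ⬝ᵥ x ≤ b * ∑ j, x j ^ 2) (i : n) :
    a ≤ hB.eigenvalues i ∧ hB.eigenvalues i ≤ b := by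
  set e := hB.eigenvectorBasis i
  have hnorm : ∑ j, e j ^ 2 = 1 := by
    have := EuclideanSpace.norm_eq e
    rw [hB.eigenvectorBasis.orthonormal.1 i, eq_comm, sqrt_eq_one] at this
    simpa using this
  have heig : hB.eigenvalues i = (B *ᵥ e) ⬝ᵥ e := by
    simpa [dotProduct_comm] using hB.eigenvalues_eq i
  simpa [heig, hnorm] using h e

lemma IsHermitian.det_mem_Icc_of_forall_mem_Icc [DecidableEq n] {B : Matrix n n ℝ}
    (hB : B.IsHermitian) {a b : ℝ} (ha : 0 ≤ a)
    (h : ∀ x, a * ∑ j, x j ^ 2 ≤ (B *ᵥ x) ⬝ᵥ x ∧ (B *ᵥ x) ⬝ᵥ x ≤ b * ∑ j, x j ^ 2) :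
    a ^ Fintype.card n ≤ B.det ∧ B.det ≤ b ^ Fintype.card n := by
  have heig := hB.eigenvalues_mem_Icc_of_forall_mem_Icc h
  rw [hB.det_eq_prod_eigenvalues, ← Finset.card_univ, ← Finset.prod_const, ← Finset.prod_const]
  exact ⟨Finset.prod_le_prod (fun _ _ ↦ ha) fun i _ ↦ (heig i).1,
    Finset.prod_le_prod (fun i _ ↦ ha.trans (heig i).1) fun i _ ↦ (heig i).2⟩

lemma IsSymm.mulVec_update_dotProduct_update [DecidableEq n] {A : Matrix n n ℝ}
    (hA : A.IsSymm) (w : n → ℝ) (k : n) (s : ℝ) :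
    (A *ᵥ update w k s) ⬝ᵥ update w k s
      = (A *ᵥ w) ⬝ᵥ w + (s - w k) * (2 * (A *ᵥ w) k) + (s - w k) ^ 2 * A k k := by
  have hupd : update w k s = w + (s - w k) • Pi.single k 1 := by
    ext j
    rcases eq_or_ne j k with rfl | hj
    · simp
    · simp [hj]
  rw [hupd]
  simp only [mulVec_add, mulVec_smul, add_dotProduct, dotProduct_add, smul_dotProduct,
    dotProduct_smul, smul_eq_mul]
  rw [hA.mulVec_dotProduct_comm (Pi.single k 1) w]
  simp only [dotProduct_single_one, mulVec_single_one, col_apply]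
  ring

lemma IsSymm.hasDerivAt_mulVec_update_dotProduct_update [DecidableEq n] {A : Matrix n n ℝ}
    (hA : A.IsSymm) (w : n → ℝ) (k : n) :
    HasDerivAt (fun s ↦ (A *ᵥ update w k s) ⬝ᵥ update w k s) (2 * (A *ᵥ w) k) (w k) := by
  simp only [hA.mulVec_update_dotProduct_update]
  have hlin : HasDerivAt (fun s ↦ s - w k) 1 (w k) := (hasDerivAt_id _).sub_const _
  refine (((hasDerivAt_const (w k) ((A *ᵥ w) ⬝ᵥ w)).add
    (hlin.mul_const (2 * (A *ᵥ w) k))).add ((hlin.pow 2).mul_const (A k k))).congr_deriv ?_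
  simp

end Matrix

lemma sqrt_mul_exp_neg_div_le {t c : ℝ} (ht : 0 ≤ t) (hc : 0 < c) :
    √t * exp (-(t / c)) ≤ 1 + c := by
  have hsqrt : √t ≤ 1 + t := by nlinarith [sq_sqrt ht, sqrt_nonneg t]
  have hexp : exp (-(t / c)) ≤ 1 := exp_le_one_iff.2 (by simp only [neg_nonpos]; positivity)
  have hpoly : t * exp (-(t / c)) ≤ c := by
    have := mul_exp_neg_le_exp_neg_one (t / c)
    have h1 : exp (-1) ≤ 1 := exp_le_one_iff.2 (by norm_num)
    rw [div_mul_eq_mul_div, div_le_iff₀ hc] at this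
    nlinarith
  nlinarith [exp_pos (-(t / c))]

section KineticGaussian

variable {d : ℕ} {κ u : ℝ}

/-- The diagonal of the scale matrix `𝕋_u`. -/
noncomputable def kineticScale (d : ℕ) (u : ℝ) : Fin d ⊕ Fin d → ℝ :=
  Sum.elim (fun _ ↦ √u) (fun _ ↦ √u ^ 3)

lemma kineticScale_pos (hu : 0 < u) (j : Fin d ⊕ Fin d) : 0 < kineticScale d u j := by
  cases j <;> simp [kineticScale, hu]

lemma tsq_eq_sum_div_kineticScale (hu : 0 < u) (z : Fin d ⊕ Fin d → ℝ) :
    tsq d u z = ∑ j, (z j / kineticScale d u j) ^ 2 := by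
  have hcube : (√u ^ 3) ^ 2 = u ^ 3 := by rw [← pow_mul, mul_comm, pow_mul, sq_sqrt hu.le]
  simp only [tsq, kineticScale, Fintype.sum_sum_type, Sum.elim_inl, Sum.elim_inr, div_pow,
    sq_sqrt hu.le, hcube, Finset.sum_div]

lemma tsq_kineticScale_mul (hu : 0 < u) (x : Fin d ⊕ Fin d → ℝ) :
    tsq d u (kineticScale d u * x) = ∑ j, x j ^ 2 := by
  simp only [tsq_eq_sum_div_kineticScale hu, Pi.mul_apply,
    mul_div_cancel_left₀ _ (kineticScale_pos hu _).ne']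

lemma tsq_nonneg (hu : 0 < u) (z : Fin d ⊕ Fin d → ℝ) : 0 ≤ tsq d u z := by
  unfold tsq
  positivity

variable (d κ u) in
def KineticComparable (A : Matrix (Fin d ⊕ Fin d) (Fin d ⊕ Fin d) ℝ) : Prop :=
  ∀ x, κ⁻¹ * tsq d u x ≤ (A *ᵥ x) ⬝ᵥ x ∧ (A *ᵥ x) ⬝ᵥ x ≤ κ * tsq d u x

lemma KineticComparable.weighted_sum_sq_mulVec_le {A : Matrix (Fin d ⊕ Fin d) (Fin d ⊕ Fin d) ℝ}
    (hcomp : KineticComparable d κ u A) (hA : A.PosSemidef) (hκ : 0 ≤ κ) (hu : 0 < u)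
    (v : Fin d ⊕ Fin d → ℝ) :
    u * ∑ i, (A *ᵥ v) (.inl i) ^ 2 + u ^ 3 * ∑ i, (A *ᵥ v) (.inr i) ^ 2
      ≤ κ ^ 2 * tsq d u v := by
  set g := A *ᵥ v
  set c := u * ∑ i, g (.inl i) ^ 2 + u ^ 3 * ∑ i, g (.inr i) ^ 2
  -- `w = 𝕋_u² g` is the test vector dual to `g`
  set w : Fin d ⊕ Fin d → ℝ := Sum.elim (fun i ↦ u * g (.inl i)) (fun i ↦ u ^ 3 * g (.inr i))
  have hgw : g ⬝ᵥ w = c := by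
    simp only [w, c, dotProduct, Fintype.sum_sum_type, Sum.elim_inl, Sum.elim_inr,
      Finset.mul_sum]
    congr 1 <;> exact Finset.sum_congr rfl fun i _ ↦ by ring
  have htw : tsq d u w = c := by
    simp only [tsq, w, c, Sum.elim_inl, Sum.elim_inr, mul_pow, ← Finset.mul_sum]
    field_simp
  have hc : 0 ≤ c := by positivity
  have hq : 0 ≤ (A *ᵥ v) ⬝ᵥ v := hA.mulVec_dotProduct_self_nonneg v
  have hcs : c ^ 2 ≤ ((A *ᵥ v) ⬝ᵥ v) * (κ * c) := by
    rw [← hgw]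
    refine (hA.sq_mulVec_dotProduct_le v w).trans (mul_le_mul_of_nonneg_left ?_ hq)
    rw [hgw, ← htw]
    exact (hcomp w).2
  have hcq : c ≤ κ * ((A *ᵥ v) ⬝ᵥ v) := by nlinarith [mul_nonneg hκ hq]
  calc c ≤ κ * ((A *ᵥ v) ⬝ᵥ v) := hcq
    _ ≤ κ * (κ * tsq d u v) := mul_le_mul_of_nonneg_left (hcomp v).2 hκ
    _ = κ ^ 2 * tsq d u v := by ring

variable {S : Matrix (Fin d ⊕ Fin d) (Fin d ⊕ Fin d) ℝ}

lemma pow_sq_mul_det_inv_mem_Icc (hκ : 0 < κ) (hu : 0 < u) (hS : S.PosDef)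
    (hcomp : KineticComparable d κ u S⁻¹) :
    (u ^ (2 * d)) ^ 2 * S.det⁻¹ ∈ Set.Icc (κ⁻¹ ^ (2 * d)) (κ ^ (2 * d)) := by
  set τ := kineticScale d u
  set D := diagonal τ
  -- `B = 𝕋_u Σ⁻¹ 𝕋_u` has all its eigenvalues in `[κ⁻¹, κ]`
  set B := Dᴴ * S⁻¹ * D
  have hDH : Dᴴ = D := by simp [D]
  have hDx : ∀ x, D *ᵥ x = τ * x := fun x ↦ funext (mulVec_diagonal τ x)
  have hquad : ∀ x, (B *ᵥ x) ⬝ᵥ x = (S⁻¹ *ᵥ (τ * x)) ⬝ᵥ (τ * x) := by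
    intro x
    simp only [B, hDH, ← mulVec_mulVec, hDx, dotProduct, Pi.mul_apply, mul_assoc, mul_left_comm]
  have hdetB := (isHermitian_conjTranspose_mul_mul D hS.inv.1).det_mem_Icc_of_forall_mem_Icc
    (inv_nonneg.2 hκ.le) fun x ↦ by rw [hquad, ← tsq_kineticScale_mul hu x]; exact hcomp _
  have hcard : Fintype.card (Fin d ⊕ Fin d) = 2 * d := by simp; ring
  have hdetD : D.det = u ^ (2 * d) := by
    simp only [D, τ, det_diagonal, Fintype.prod_sum_type, kineticScale, Sum.elim_inl,
      Sum.elim_inr, Finset.prod_const, Finset.card_univ, Fintype.card_fin]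
    rw [← pow_mul, ← pow_add, show d + 3 * d = 2 * (2 * d) by ring, pow_mul, sq_sqrt hu.le]
  have hdetB_eq : B.det = (u ^ (2 * d)) ^ 2 * S.det⁻¹ := by
    rw [det_mul, det_mul, det_conjTranspose, star_trivial, hdetD, det_nonsing_inv,
      Ring.inverse_eq_inv']
    ring
  rw [← hdetB_eq, ← hcard]
  exact hdetB

lemma det_rpow_neg_half_mem_Icc (hκ : 0 < κ) (hu : 0 < u) (hS : S.PosDef)
    (hcomp : KineticComparable d κ u S⁻¹) :
    S.det ^ (-(1 : ℝ) / 2) ∈ Set.Icc ((κ ^ d)⁻¹ * (u ^ (2 * d))⁻¹) (κ ^ d * (u ^ (2 * d))⁻¹) := by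
  obtain ⟨hlow, hupp⟩ := pow_sq_mul_det_inv_mem_Icc hκ hu hS hcomp
  have hdetS := hS.det_pos
  set r := S.det ^ (-(1 : ℝ) / 2)
  have hr : 0 < r := rpow_pos_of_pos hdetS _
  have hr2 : r ^ 2 = (u ^ (2 * d)) ^ 2 * S.det⁻¹ * ((u ^ (2 * d))⁻¹) ^ 2 := by
    rw [← rpow_natCast, ← rpow_mul hdetS.le]
    norm_num [rpow_neg_one]
    field_simp
  constructor
  · rw [← pow_le_pow_iff_left₀ (by positivity) hr.le two_ne_zero, hr2]
    calc ((κ ^ d)⁻¹ * (u ^ (2 * d))⁻¹) ^ 2 = κ⁻¹ ^ (2 * d) * ((u ^ (2 * d))⁻¹) ^ 2 := by ring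
      _ ≤ _ := by gcongr
  · rw [← pow_le_pow_iff_left₀ hr.le (by positivity) two_ne_zero, hr2]
    calc _ ≤ κ ^ (2 * d) * ((u ^ (2 * d))⁻¹) ^ 2 := by gcongr
      _ = (κ ^ d * (u ^ (2 * d))⁻¹) ^ 2 := by ring

lemma pdS_gaussDens (hS : S.PosDef) (m y : Fin d ⊕ Fin d → ℝ) (k : Fin d ⊕ Fin d) :
    pdS d k (gaussDens d S m) y = gaussDens d S m y * (S⁻¹ *ᵥ (m - y)) k := by
  have hsymm : S⁻¹.IsSymm := isHermitian_iff_isSymm.mp hS.inv.1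
  have hsub : ∀ t, m - update y k t = update (m - y) k (m k - t) := by
    intro t
    ext j
    rcases eq_or_ne j k with rfl | hj <;> simp [*]
  have hQ : HasDerivAt (fun t ↦ (S⁻¹ *ᵥ (m - update y k t)) ⬝ᵥ (m - update y k t))
      (2 * (S⁻¹ *ᵥ (m - y)) k * -1) (y k) := by
    simp only [hsub]
    exact (hsymm.hasDerivAt_mulVec_update_dotProduct_update (m - y) k).comp (y k)
      ((hasDerivAt_id (y k)).const_sub (m k))
  have := ((hQ.const_mul (-(1 / 2))).exp).const_mul
    ((2 * π) ^ (-(d : ℝ)) * S.det ^ (-(1 : ℝ) / 2))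
  unfold pdS gaussDens
  rw [this.deriv, update_eq_self]
  ring

lemma gkS_eq {lam : ℝ} (hlam : 0 < lam) (hu : 0 < u) (z : Fin d ⊕ Fin d → ℝ) :
    gkS d lam u z =
      (lam ^ d)⁻¹ * exp (-(tsq d u z / lam)) * ((2 * π) ^ d * u ^ (2 * d))⁻¹ := by
  have hpow : u ^ (-(2 * (d : ℝ))) = (u ^ (2 * d))⁻¹ := by
    rw [← rpow_natCast, ← rpow_neg hu.le]
    push_cast
    rfl
  rw [gkS, tsq, hpow, rpow_neg (by positivity), rpow_natCast, mul_pow, mul_inv, mul_inv]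
  ring_nf

lemma gkS_pos {lam : ℝ} (hlam : 0 < lam) (hu : 0 < u) (z : Fin d ⊕ Fin d → ℝ) :
    0 < gkS d lam u z := by
  rw [gkS_eq hlam hu]
  positivity

lemma gaussDens_eq (m y : Fin d ⊕ Fin d → ℝ) :
    gaussDens d S m y = S.det ^ (-(1 : ℝ) / 2) *
      exp (-(1 / 2) * ((S⁻¹ *ᵥ (m - y)) ⬝ᵥ (m - y))) * ((2 * π) ^ d)⁻¹ := by
  rw [gaussDens, rpow_neg (by positivity), rpow_natCast]
  ring

lemma gaussDens_le (hκ : 0 < κ) (hu : 0 < u) (hS : S.PosDef)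
    (hcomp : KineticComparable d κ u S⁻¹) (m y : Fin d ⊕ Fin d → ℝ) :
    gaussDens d S m y ≤
      κ ^ d * exp (-(tsq d u (m - y) / (2 * κ))) * ((2 * π) ^ d * u ^ (2 * d))⁻¹ := by
  have hexp : -(1 / 2) * ((S⁻¹ *ᵥ (m - y)) ⬝ᵥ (m - y)) ≤ -(tsq d u (m - y) / (2 * κ)) := by
    have := (hcomp (m - y)).1
    rw [show tsq d u (m - y) / (2 * κ) = κ⁻¹ * tsq d u (m - y) / 2 by field_simp]
    linarith
  rw [gaussDens_eq]
  calc _ ≤ κ ^ d * (u ^ (2 * d))⁻¹ * exp (-(tsq d u (m - y) / (2 * κ))) * ((2 * π) ^ d)⁻¹ := by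
        gcongr
        exact (det_rpow_neg_half_mem_Icc hκ hu hS hcomp).2
    _ = _ := by rw [mul_inv]; ring

lemma le_gaussDens (hκ : 0 < κ) (hu : 0 < u) (hS : S.PosDef)
    (hcomp : KineticComparable d κ u S⁻¹) (m y : Fin d ⊕ Fin d → ℝ) :
    (κ ^ d)⁻¹ * exp (-(κ * tsq d u (m - y) / 2)) * ((2 * π) ^ d * u ^ (2 * d))⁻¹ ≤
      gaussDens d S m y := by
  have hexp : -(κ * tsq d u (m - y) / 2) ≤ -(1 / 2) * ((S⁻¹ *ᵥ (m - y)) ⬝ᵥ (m - y)) := by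
    linarith [(hcomp (m - y)).2]
  rw [gaussDens_eq]
  calc _ = (κ ^ d)⁻¹ * (u ^ (2 * d))⁻¹ * exp (-(κ * tsq d u (m - y) / 2)) * ((2 * π) ^ d)⁻¹ := by
        rw [mul_inv]; ring
    _ ≤ _ := by
        gcongr
        · exact (rpow_pos_of_pos hS.det_pos _).le
        · exact (det_rpow_neg_half_mem_Icc hκ hu hS hcomp).1

lemma gaussDens_le_gkS (hκ : 1 ≤ κ) (hu : 0 < u) (hS : S.PosDef)
    (hcomp : KineticComparable d κ u S⁻¹) (m y : Fin d ⊕ Fin d → ℝ) :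
    gaussDens d S m y ≤ (4 * κ ^ 2) ^ d * gkS d (4 * κ) u (m - y) := by
  have hκ0 : 0 < κ := by linarith
  have ht := tsq_nonneg hu (m - y)
  have h4 : (4 * κ ^ 2) ^ d = κ ^ d * (4 * κ) ^ d := by rw [← mul_pow]; ring
  rw [gkS_eq (by positivity) hu]
  calc gaussDens d S m y
      ≤ κ ^ d * exp (-(tsq d u (m - y) / (2 * κ))) * ((2 * π) ^ d * u ^ (2 * d))⁻¹ :=
        gaussDens_le hκ0 hu hS hcomp m y
    _ ≤ κ ^ d * exp (-(tsq d u (m - y) / (4 * κ))) * ((2 * π) ^ d * u ^ (2 * d))⁻¹ := by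
        gcongr _ * exp ?_ * _
        rw [neg_le_neg_iff]
        gcongr
        linarith
    _ = _ := by
        rw [h4]
        field_simp

lemma gkS_le_gaussDens (hκ : 1 ≤ κ) (hu : 0 < u) (hS : S.PosDef)
    (hcomp : KineticComparable d κ u S⁻¹) (m y : Fin d ⊕ Fin d → ℝ) :
    ((4 * κ ^ 2) ^ d)⁻¹ * gkS d (4 * κ)⁻¹ u (m - y) ≤ gaussDens d S m y := by
  have hκ0 : 0 < κ := by linarith
  have ht := tsq_nonneg hu (m - y)
  have h4 : (4 * κ ^ 2) ^ d = κ ^ d * (4 * κ) ^ d := by rw [← mul_pow]; ring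
  rw [gkS_eq (by positivity) hu]
  calc _ = (κ ^ d)⁻¹ * exp (-(4 * κ * tsq d u (m - y))) * ((2 * π) ^ d * u ^ (2 * d))⁻¹ := by
        rw [h4, div_inv_eq_mul, inv_pow, inv_inv]
        field_simp
    _ ≤ (κ ^ d)⁻¹ * exp (-(κ * tsq d u (m - y) / 2)) * ((2 * π) ^ d * u ^ (2 * d))⁻¹ := by
        gcongr _ * exp ?_ * _
        nlinarith [mul_nonneg hκ0.le ht]
    _ ≤ gaussDens d S m y := le_gaussDens hκ0 hu hS hcomp m y

lemma sqrt_sum_sq_pdS_le (hκ : 1 ≤ κ) (hu : 0 < u) (hS : S.PosDef)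
    (hcomp : KineticComparable d κ u S⁻¹) (m y : Fin d ⊕ Fin d → ℝ) {r : ℝ} (hr : 0 < r)
    (b : Fin d → Fin d ⊕ Fin d)
    (hb : r * ∑ i, (S⁻¹ *ᵥ (m - y)) (b i) ^ 2 ≤ κ ^ 2 * tsq d u (m - y)) :
    √(∑ i, pdS d (b i) (gaussDens d S m) y ^ 2) ≤
      5 * κ ^ 2 * (4 * κ ^ 2) ^ d * r ^ (-(1 : ℝ) / 2) * gkS d (4 * κ) u (m - y) := by
  have hκ0 : 0 < κ := by linarith
  have hp : 0 ≤ gaussDens d S m y := by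
    rw [gaussDens_eq]
    have := hS.det_pos
    positivity
  set t := tsq d u (m - y)
  set G := ∑ i, (S⁻¹ *ᵥ (m - y)) (b i) ^ 2
  set p := gaussDens d S m y
  have ht : 0 ≤ t := tsq_nonneg hu (m - y)
  have hsqrt : √(∑ i, pdS d (b i) (gaussDens d S m) y ^ 2) = p * √G := by
    simp only [pdS_gaussDens hS, mul_pow, ← Finset.mul_sum, G]
    rw [sqrt_mul (sq_nonneg _), sqrt_sq hp]
  have hrpow : r ^ (-(1 : ℝ) / 2) = (√r)⁻¹ := by
    rw [neg_div, rpow_neg hr.le, sqrt_eq_rpow]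
  have hG : √G ≤ κ * √t * r ^ (-(1 : ℝ) / 2) := by
    rw [hrpow, ← div_eq_mul_inv, le_div_iff₀ (sqrt_pos.2 hr), ← sqrt_mul' _ hr.le,
      ← sqrt_sq hκ0.le, ← sqrt_mul (sq_nonneg _), mul_comm G]
    exact sqrt_le_sqrt hb
  -- half of the Gaussian decay absorbs the factor `√t`
  have hdecay : √t * exp (-(t / (2 * κ))) ≤ 5 * κ * exp (-(t / (4 * κ))) := by
    have hsplit : exp (-(t / (2 * κ))) = exp (-(t / (4 * κ))) * exp (-(t / (4 * κ))) := by
      rw [← exp_add]; congr 1; field_simp; ring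
    rw [hsplit, ← mul_assoc]
    refine mul_le_mul_of_nonneg_right ?_ (exp_pos _).le
    linarith [sqrt_mul_exp_neg_div_le ht (by positivity : 0 < 4 * κ)]
  have h4 : (4 * κ ^ 2) ^ d = κ ^ d * (4 * κ) ^ d := by rw [← mul_pow]; ring
  rw [hsqrt, gkS_eq (by positivity) hu, h4]
  calc p * √G
      ≤ (κ ^ d * exp (-(t / (2 * κ))) * ((2 * π) ^ d * u ^ (2 * d))⁻¹) *
          (κ * √t * r ^ (-(1 : ℝ) / 2)) :=
        mul_le_mul (gaussDens_le hκ0 hu hS hcomp m y) hG (sqrt_nonneg _) (by positivity)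
    _ = κ ^ (d + 1) * r ^ (-(1 : ℝ) / 2) * ((2 * π) ^ d * u ^ (2 * d))⁻¹ *
          (√t * exp (-(t / (2 * κ)))) := by ring
    _ ≤ κ ^ (d + 1) * r ^ (-(1 : ℝ) / 2) * ((2 * π) ^ d * u ^ (2 * d))⁻¹ *
          (5 * κ * exp (-(t / (4 * κ)))) := by gcongr
    _ = _ := by field_simp; ring

lemma sqrt_sum_sq_pdS_inl_le (hκ : 1 ≤ κ) (hu : 0 < u) (hS : S.PosDef)
    (hcomp : KineticComparable d κ u S⁻¹) (m y : Fin d ⊕ Fin d → ℝ) :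
    √(∑ i, pdS d (.inl i) (gaussDens d S m) y ^ 2) ≤
      5 * κ ^ 2 * (4 * κ ^ 2) ^ d * u ^ (-(1 : ℝ) / 2) * gkS d (4 * κ) u (m - y) := by
  refine sqrt_sum_sq_pdS_le hκ hu hS hcomp m y hu _ ?_
  have := hcomp.weighted_sum_sq_mulVec_le hS.inv.posSemidef (by linarith) hu (m - y)
  have : 0 ≤ u ^ 3 * ∑ i, (S⁻¹ *ᵥ (m - y)) (.inr i) ^ 2 := by positivity
  linarith

lemma sqrt_sum_sq_pdS_inr_le (hκ : 1 ≤ κ) (hu : 0 < u) (hS : S.PosDef)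
    (hcomp : KineticComparable d κ u S⁻¹) (m y : Fin d ⊕ Fin d → ℝ) :
    √(∑ i, pdS d (.inr i) (gaussDens d S m) y ^ 2) ≤
      5 * κ ^ 2 * (4 * κ ^ 2) ^ d * u ^ (-(3 : ℝ) / 2) * gkS d (4 * κ) u (m - y) := by
  have hpow : u ^ (-(3 : ℝ) / 2) = (u ^ 3) ^ (-(1 : ℝ) / 2) := by
    rw [← rpow_natCast, ← rpow_mul hu.le]
    norm_num
  rw [hpow]
  refine sqrt_sum_sq_pdS_le hκ hu hS hcomp m y (by positivity) _ ?_
  have := hcomp.weighted_sum_sq_mulVec_le hS.inv.posSemidef (by linarith) hu (m - y)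
  have : 0 ≤ u * ∑ i, (S⁻¹ *ᵥ (m - y)) (.inl i) ^ 2 := by positivity
  linarith

end KineticGaussian

theorem stmt9_general (d : ℕ) (κ : ℝ) (hκ : 1 ≤ κ) :
    ∃ C₀ : ℝ, 1 ≤ C₀ ∧ ∃ lam₀ : ℝ, 1 ≤ lam₀ ∧
      ∀ u : ℝ, 0 < u → ∀ m : (Fin d ⊕ Fin d) → ℝ,
      ∀ S : Matrix (Fin d ⊕ Fin d) (Fin d ⊕ Fin d) ℝ, S.IsSymm → S.PosDef →
        (∀ x : (Fin d ⊕ Fin d) → ℝ,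
          κ⁻¹ * tsq d u x ≤ (S⁻¹ *ᵥ x) ⬝ᵥ x ∧ (S⁻¹ *ᵥ x) ⬝ᵥ x ≤ κ * tsq d u x) →
        ∀ y : (Fin d ⊕ Fin d) → ℝ,
          C₀⁻¹ * gkS d lam₀⁻¹ u (m - y) ≤ gaussDens d S m y ∧
          gaussDens d S m y ≤ C₀ * gkS d lam₀ u (m - y) ∧
          Real.sqrt (∑ i : Fin d, (pdS d (Sum.inl i) (gaussDens d S m) y) ^ 2) ≤
            C₀ * u ^ (-(1 : ℝ) / 2) * gkS d lam₀ u (m - y) ∧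
          Real.sqrt (∑ i : Fin d, (pdS d (Sum.inr i) (gaussDens d S m) y) ^ 2) ≤
            C₀ * u ^ (-(3 : ℝ) / 2) * gkS d lam₀ u (m - y) := by
  have hκ4 : 1 ≤ 4 * κ ^ 2 := by nlinarith
  have hC : (4 * κ ^ 2) ^ d ≤ 5 * κ ^ 2 * (4 * κ ^ 2) ^ d :=
    le_mul_of_one_le_left (by positivity) (by nlinarith)
  refine ⟨5 * κ ^ 2 * (4 * κ ^ 2) ^ d, hC.trans' (one_le_pow₀ hκ4), 4 * κ, by linarith,
    fun u hu m S _ hS hcomp y ↦ ⟨?_, ?_, sqrt_sum_sq_pdS_inl_le hκ hu hS hcomp m y,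
      sqrt_sum_sq_pdS_inr_le hκ hu hS hcomp m y⟩⟩
  · calc _ ≤ ((4 * κ ^ 2) ^ d)⁻¹ * gkS d (4 * κ)⁻¹ u (m - y) := by
          gcongr
          exact (gkS_pos (by positivity) hu _).le
      _ ≤ gaussDens d S m y := gkS_le_gaussDens hκ hu hS hcomp m y
  · calc _ ≤ (4 * κ ^ 2) ^ d * gkS d (4 * κ) u (m - y) := gaussDens_le_gkS hκ hu hS hcomp m y
      _ ≤ _ := by
          gcongr
          exact (gkS_pos (by positivity) hu _).le

/-- Gaussian densities whose covariance is comparable to the kinetic scale matrix satisfy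
two-sided anisotropic heat-kernel bounds, and the corresponding gradient bounds in the
non-degenerate and degenerate variables. -/
theorem stmt9 (d : ℕ) (hd : 1 ≤ d) (κ : ℝ) (hκ : 1 ≤ κ) :
    ∃ C₀ : ℝ, 1 ≤ C₀ ∧ ∃ lam₀ : ℝ, 1 ≤ lam₀ ∧
      ∀ u : ℝ, 0 < u → ∀ m : (Fin d ⊕ Fin d) → ℝ,
      ∀ S : Matrix (Fin d ⊕ Fin d) (Fin d ⊕ Fin d) ℝ, S.IsSymm → S.PosDef →
        (∀ x : (Fin d ⊕ Fin d) → ℝ,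
          κ⁻¹ * tsq d u x ≤ (S⁻¹ *ᵥ x) ⬝ᵥ x ∧ (S⁻¹ *ᵥ x) ⬝ᵥ x ≤ κ * tsq d u x) →
        ∀ y : (Fin d ⊕ Fin d) → ℝ,
          C₀⁻¹ * gkS d lam₀⁻¹ u (m - y) ≤ gaussDens d S m y ∧
          gaussDens d S m y ≤ C₀ * gkS d lam₀ u (m - y) ∧
          Real.sqrt (∑ i : Fin d, (pdS d (Sum.inl i) (gaussDens d S m) y) ^ 2) ≤
            C₀ * u ^ (-(1 : ℝ) / 2) * gkS d lam₀ u (m - y) ∧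
          Real.sqrt (∑ i : Fin d, (pdS d (Sum.inr i) (gaussDens d S m) y) ^ 2) ≤
            C₀ * u ^ (-(3 : ℝ) / 2) * gkS d lam₀ u (m - y) :=
  stmt9_general d κ hκ
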